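/- Let X ≥ 1 and s = σ+it with σ > θ and s ≠ 1. Then | ζ_X(s) − κ·(1 − X^{1−s})/(s−1) | ≤ A·( |s|·(1 − X^{θ−σ})/(σ−θ) + X^{θ−σ} ), and consequently | ζ_X(s) − κ·(1 − X^{1−s})/(s−1) | ≤ A·min( |s|/(σ−θ), |s|·log X + X^{θ−σ} ). -/

import Mathlib

open MeasureTheory Complex Filter

/-- The norm of an element `g` of the free arithmetical semigroup `ι →₀ ℕ`,
given the norms `q i > 1` of the generators (Beurling primes). -/
noncomputable def gnorm {ι : Type*} (q : ι → ℝ) (g : ι →₀ ℕ) : ℝ :=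
  g.prod fun i k => q i ^ k

/-- The counting function `N(x) = #{g : |g| ≤ x}`. -/
noncomputable def Ncount {ι : Type*} (q : ι → ℝ) (x : ℝ) : ℕ :=
  Nat.card {g : ι →₀ ℕ // gnorm q g ≤ x}

/-- The partial zeta function `ζ_X(s) = Σ_{|g| ≤ X} |g|^{-s}` (a finite sum
under the discreteness assumption). -/
noncomputable def zetaX {ι : Type*} (q : ι → ℝ) (X : ℝ) (s : ℂ) : ℂ :=
  ∑ᶠ g ∈ {g : ι →₀ ℕ | gnorm q g ≤ X}, (gnorm q g : ℂ) ^ (-s)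

/-- The real-valued partial zeta function at a real argument `σ`:
`ζ_X(σ) = Σ_{|g| ≤ X} |g|^{-σ}`. -/
noncomputable def zetaXR {ι : Type*} (q : ι → ℝ) (X : ℝ) (σ : ℝ) : ℝ :=
  ∑ᶠ g ∈ {g : ι →₀ ℕ | gnorm q g ≤ X}, (gnorm q g) ^ (-σ)

/-! With `R(x) = N(x) - κ (x - 1)`, both `ζ_X(s)` and `κ (1 - X^{1-s})/(s - 1)` are integrals of
`x^{-s}` over `[1, X]`, against `dN` and `κ dx`; partial summation turns their difference into
`R(X) X^{-s} + s ∫_1^X R(x) x^{-s-1} dx`. Axiom A gives `|R(x)| ≤ A x^θ`, and integrating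
`A x^{θ-σ-1}` yields the first bound. The second follows from `σ - θ ≤ |s|` and
`1 - X^{-(σ-θ)} ≤ (σ - θ) log X`. -/

open Set Finset

theorem intervalIntegral.integral_indicator_Ici {E : Type*} [NormedAddCommGroup E]
    [NormedSpace ℝ E] {μ : Measure ℝ} [NullSingletonClass μ] {f : ℝ → E} {a b c : ℝ}
    (hab : a ≤ b) (hbc : b ≤ c) :
    ∫ x in a..c, (Ici b).indicator f x ∂μ = ∫ x in b..c, f x ∂μ := by
  have hae : (Ici b).indicator f =ᵐ[μ] (Ioi b).indicator f :=
    indicator_ae_eq_of_ae_eq_set Ioi_ae_eq_Ici.symm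
  rw [intervalIntegral.integral_of_le (hab.trans hbc), intervalIntegral.integral_of_le hbc,
    MeasureTheory.integral_congr_ae (ae_restrict_of_ae hae),
    setIntegral_indicator measurableSet_Ioi, Ioc_inter_Ioi, sup_eq_right.mpr hab]

section CpowIntegrals

variable {s : ℂ}

theorem integral_cpow_neg_sub_one (hs : s ≠ 0) {a b : ℝ} (ha : 0 < a) (hb : 0 < b) :
    ∫ x in a..b, (x : ℂ) ^ (-s - 1) = ((a : ℂ) ^ (-s) - (b : ℂ) ^ (-s)) / s := by
  have hne : -s - 1 ≠ -1 := fun h => hs (by linear_combination -h)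
  rw [integral_cpow (Or.inr ⟨hne, notMem_uIcc_of_lt ha hb⟩), sub_add_cancel, div_neg,
    ← neg_div, neg_sub]

theorem cpow_neg_eq_add_mul_integral (hs : s ≠ 0) {b X : ℝ} (hb : 0 < b) (hX : 0 < X) :
    (b : ℂ) ^ (-s) = (X : ℂ) ^ (-s) + s * ∫ x in b..X, (x : ℂ) ^ (-s - 1) := by
  rw [integral_cpow_neg_sub_one hs hb hX, mul_div_cancel₀ _ hs, add_sub_cancel]

theorem sum_cpow_neg_eq_add_mul_integral {α : Type*} (S : Finset α) (f : α → ℝ)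
    (hs : s ≠ 0) {a X : ℝ} (ha : 0 < a) (hf : ∀ g ∈ S, f g ∈ Icc a X) :
    ∑ g ∈ S, (f g : ℂ) ^ (-s) = #S * (X : ℂ) ^ (-s) +
      s * ∫ x in a..X, (#{g ∈ S | f g ≤ x} : ℂ) * (x : ℂ) ^ (-s - 1) := by
  have hterm : ∀ g ∈ S, (f g : ℂ) ^ (-s) = (X : ℂ) ^ (-s) +
      s * ∫ x in a..X, (Ici (f g)).indicator (fun x : ℝ => (x : ℂ) ^ (-s - 1)) x := by
    intro g hg
    obtain ⟨hag, hgX⟩ := hf g hg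
    rw [intervalIntegral.integral_indicator_Ici hag hgX,
      cpow_neg_eq_add_mul_integral hs (ha.trans_le hag) (ha.trans_le (hag.trans hgX))]
  have hint : ∀ g ∈ S, IntervalIntegrable
      ((Ici (f g)).indicator fun x : ℝ => (x : ℂ) ^ (-s - 1)) volume a X := by
    intro g hg
    have H := intervalIntegral.intervalIntegrable_cpow (r := -s - 1) (μ := volume)
      (Or.inr (notMem_uIcc_of_lt ha (ha.trans_le ((hf g hg).1.trans (hf g hg).2))))
    exact ⟨H.1.indicator measurableSet_Ici, H.2.indicator measurableSet_Ici⟩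
  rw [sum_congr rfl hterm, sum_add_distrib, sum_const, nsmul_eq_mul, ← mul_sum,
    ← intervalIntegral.integral_finsetSum hint]
  congr 3 with x
  simp [indicator_apply, sum_ite]

theorem one_sub_cpow_div_eq_add_mul_integral (hs0 : s ≠ 0) (hs1 : s ≠ 1) {X : ℝ}
    (hX : 0 < X) :
    (1 - (X : ℂ) ^ (1 - s)) / (s - 1) =
      ((X - 1 : ℝ) : ℂ) * (X : ℂ) ^ (-s) +
        s * ∫ x in (1 : ℝ)..X, ((x - 1 : ℝ) : ℂ) * (x : ℂ) ^ (-s - 1) := by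
  have h0 : (0 : ℝ) ∉ uIcc 1 X := notMem_uIcc_of_lt one_pos hX
  have hsplit : ∫ x in (1 : ℝ)..X, ((x - 1 : ℝ) : ℂ) * (x : ℂ) ^ (-s - 1) =
      (∫ x in (1 : ℝ)..X, (x : ℂ) ^ (-s)) - ∫ x in (1 : ℝ)..X, (x : ℂ) ^ (-s - 1) := by
    rw [← intervalIntegral.integral_sub (intervalIntegral.intervalIntegrable_cpow (Or.inr h0))
      (intervalIntegral.intervalIntegrable_cpow (Or.inr h0))]
    refine intervalIntegral.integral_congr fun x hx => ?_
    have hx0 : (x : ℂ) ≠ 0 := ofReal_ne_zero.mpr fun h => h0 (h ▸ hx)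
    rw [sub_eq_add_neg (-s), cpow_add _ _ hx0, cpow_neg_one]
    push_cast
    field_simp
  have hne : -s ≠ -1 := fun h => hs1 (neg_inj.mp h)
  have hXs : (X : ℂ) ^ (1 - s) = X * (X : ℂ) ^ (-s) := by
    rw [sub_eq_add_neg, cpow_add _ _ (ofReal_ne_zero.mpr hX.ne'), cpow_one]
  rw [hsplit, integral_cpow (Or.inr ⟨hne, h0⟩), integral_cpow_neg_sub_one hs0 one_pos hX,
    neg_add_eq_sub, ofReal_one, one_cpow, one_cpow, hXs]
  have h1s : (1 : ℂ) - s ≠ 0 := sub_ne_zero.mpr (Ne.symm hs1)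
  have hs1' : s - 1 ≠ 0 := sub_ne_zero.mpr hs1
  push_cast
  field_simp
  ring

end CpowIntegrals

section Beurling

variable {ι : Type*} {q : ι → ℝ}

theorem one_le_gnorm (hq : ∀ i, 1 < q i) (g : ι →₀ ℕ) : 1 ≤ gnorm q g :=
  Finset.one_le_prod fun i _ => one_le_pow₀ (hq i).le

theorem Ncount_eq_card (hdisc : ∀ x : ℝ, {g : ι →₀ ℕ | gnorm q g ≤ x}.Finite) (x : ℝ) :
    Ncount q x = #(hdisc x).toFinset := by
  rw [Ncount, ← Set.coe_ofPred, Nat.card_coe_set_eq, Set.ncard_eq_toFinset_card _ (hdisc x)]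

theorem Ncount_eq_card_filter (hdisc : ∀ x : ℝ, {g : ι →₀ ℕ | gnorm q g ≤ x}.Finite)
    {x X : ℝ} (hxX : x ≤ X) :
    Ncount q x = #{g ∈ (hdisc X).toFinset | gnorm q g ≤ x} := by
  rw [Ncount_eq_card hdisc]
  congr 1
  ext g
  simpa using fun h => h.trans hxX

theorem Ncount_mono (hdisc : ∀ x : ℝ, {g : ι →₀ ℕ | gnorm q g ≤ x}.Finite) :
    Monotone (Ncount q) := fun x y hxy => by
  rw [Ncount_eq_card hdisc, Ncount_eq_card hdisc]
  exact card_le_card (Set.Finite.toFinset_subset_toFinset.mpr fun g hg => le_trans hg hxy)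

theorem zetaX_eq_sum (hdisc : ∀ x : ℝ, {g : ι →₀ ℕ | gnorm q g ≤ x}.Finite) (X : ℝ) (s : ℂ) :
    zetaX q X s = ∑ g ∈ (hdisc X).toFinset, (gnorm q g : ℂ) ^ (-s) :=
  finsum_mem_eq_finite_toFinset_sum _ (hdisc X)

theorem zetaX_eq_add_mul_integral (hq : ∀ i, 1 < q i)
    (hdisc : ∀ x : ℝ, {g : ι →₀ ℕ | gnorm q g ≤ x}.Finite) {X : ℝ} (hX : 1 ≤ X) {s : ℂ}
    (hs : s ≠ 0) :
    zetaX q X s = Ncount q X * (X : ℂ) ^ (-s) +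
      s * ∫ x in (1 : ℝ)..X, (Ncount q x : ℂ) * (x : ℂ) ^ (-s - 1) := by
  rw [zetaX_eq_sum hdisc, sum_cpow_neg_eq_add_mul_integral _ _ hs one_pos
    fun g hg => ⟨one_le_gnorm hq g, (hdisc X).mem_toFinset.mp hg⟩, Ncount_eq_card hdisc]
  congr 2
  refine intervalIntegral.integral_congr fun x hx => ?_
  rw [uIcc_of_le hX] at hx
  simp only [Ncount_eq_card_filter hdisc hx.2]

theorem zetaX_sub_eq_add_mul_integral (hq : ∀ i, 1 < q i)
    (hdisc : ∀ x : ℝ, {g : ι →₀ ℕ | gnorm q g ≤ x}.Finite) (κ : ℝ) {X : ℝ} (hX : 1 ≤ X)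
    {s : ℂ} (hs0 : s ≠ 0) (hs1 : s ≠ 1) :
    zetaX q X s - κ * (1 - (X : ℂ) ^ (1 - s)) / (s - 1) =
      ((Ncount q X - κ * (X - 1) : ℝ) : ℂ) * (X : ℂ) ^ (-s) +
        s * ∫ x in (1 : ℝ)..X, ((Ncount q x - κ * (x - 1) : ℝ) : ℂ) * (x : ℂ) ^ (-s - 1) := by
  have hX0 : 0 < X := one_pos.trans_le hX
  have hcpow : ContinuousOn (fun x : ℝ => (x : ℂ) ^ (-s - 1)) (uIcc 1 X) := fun x hx =>
    (continuousAt_ofReal_cpow_const x _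
      (Or.inr fun h => notMem_uIcc_of_lt one_pos hX0 (h ▸ hx))).continuousWithinAt
  have hN : IntervalIntegrable (fun x : ℝ => (Ncount q x : ℂ) * (x : ℂ) ^ (-s - 1))
      volume 1 X := by
    have H : IntervalIntegrable (fun x => (Ncount q x : ℝ)) volume 1 X :=
      (Nat.mono_cast.comp (Ncount_mono hdisc)).intervalIntegrable
    have HC : IntervalIntegrable (fun x => ((Ncount q x : ℝ) : ℂ)) volume 1 X :=
      ⟨H.1.ofReal, H.2.ofReal⟩
    simpa only [ofReal_natCast] using HC.mul_continuousOn hcpow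
  have hlin : IntervalIntegrable (fun x : ℝ => ((x - 1 : ℝ) : ℂ) * (x : ℂ) ^ (-s - 1))
      volume 1 X :=
    (continuous_ofReal.comp (continuous_id.sub continuous_const)).intervalIntegrable 1 X
      |>.mul_continuousOn hcpow
  have hsplit : ∫ x in (1 : ℝ)..X, ((Ncount q x - κ * (x - 1) : ℝ) : ℂ) * (x : ℂ) ^ (-s - 1) =
      (∫ x in (1 : ℝ)..X, (Ncount q x : ℂ) * (x : ℂ) ^ (-s - 1)) -
        κ * ∫ x in (1 : ℝ)..X, ((x - 1 : ℝ) : ℂ) * (x : ℂ) ^ (-s - 1) := by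
    rw [← intervalIntegral.integral_const_mul,
      ← intervalIntegral.integral_sub hN (hlin.const_mul _)]
    congr 1 with x
    push_cast
    ring
  rw [zetaX_eq_add_mul_integral hq hdisc hX hs0, mul_div_assoc,
    one_sub_cpow_div_eq_add_mul_integral hs0 hs1 hX0, hsplit]
  push_cast
  ring

end Beurling

theorem norm_ofReal_mul_cpow_neg_le {r A θ x : ℝ} (hx : 0 < x) (hr : |r| ≤ A * x ^ θ) (w : ℂ) :
    ‖(r : ℂ) * (x : ℂ) ^ (-w)‖ ≤ A * x ^ (θ - w.re) := by
  rw [norm_mul, norm_real, Real.norm_eq_abs, norm_cpow_eq_rpow_re_of_pos hx, neg_re,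
    sub_eq_add_neg, Real.rpow_add hx, ← mul_assoc]
  exact mul_le_mul_of_nonneg_right hr (Real.rpow_nonneg hx.le _)

theorem integral_rpow_sub_one {e X : ℝ} (he : e ≠ 0) (hX : 0 < X) :
    ∫ x in (1 : ℝ)..X, x ^ (e - 1) = (X ^ e - 1) / e := by
  rw [integral_rpow (Or.inr ⟨by simpa using he, notMem_uIcc_of_lt one_pos hX⟩), sub_add_cancel,
    Real.one_rpow]

theorem norm_ofReal_mul_cpow_neg_add_mul_integral_le {R : ℝ → ℝ} {A θ X : ℝ} {s : ℂ}
    (hX : 1 ≤ X) (hs : θ < s.re) (hR : ∀ x ∈ Icc 1 X, |R x| ≤ A * x ^ θ) :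
    ‖(R X : ℂ) * (X : ℂ) ^ (-s) + s * ∫ x in (1 : ℝ)..X, (R x : ℂ) * (x : ℂ) ^ (-s - 1)‖ ≤
      A * (‖s‖ * (1 - X ^ (θ - s.re)) / (s.re - θ) + X ^ (θ - s.re)) := by
  have hX0 : 0 < X := one_pos.trans_le hX
  have hintegral : ‖∫ x in (1 : ℝ)..X, (R x : ℂ) * (x : ℂ) ^ (-s - 1)‖ ≤
      A * ((1 - X ^ (θ - s.re)) / (s.re - θ)) := by
    have hbound : ∀ x ∈ Ioc 1 X,
        ‖(R x : ℂ) * (x : ℂ) ^ (-s - 1)‖ ≤ A * x ^ (θ - s.re - 1) := fun x hx => by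
      have h := norm_ofReal_mul_cpow_neg_le (one_pos.trans hx.1)
        (hR x (Ioc_subset_Icc_self hx)) (s + 1)
      rwa [neg_add', add_re, one_re, ← sub_sub] at h
    have hint : IntervalIntegrable (fun x => A * x ^ (θ - s.re - 1)) volume 1 X :=
      (intervalIntegral.intervalIntegrable_rpow
        (Or.inr (notMem_uIcc_of_lt one_pos hX0))).const_mul A
    refine (intervalIntegral.norm_integral_le_of_norm_le hX (ae_of_all _ hbound) hint).trans_eq ?_
    rw [intervalIntegral.integral_const_mul, integral_rpow_sub_one (sub_ne_zero.mpr hs.ne) hX0,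
      ← neg_sub s.re θ, div_neg, ← neg_div, neg_sub]
  calc _ ≤ ‖(R X : ℂ) * (X : ℂ) ^ (-s)‖ +
          ‖s‖ * ‖∫ x in (1 : ℝ)..X, (R x : ℂ) * (x : ℂ) ^ (-s - 1)‖ := by
        rw [← norm_mul]
        exact norm_add_le _ _
    _ ≤ A * X ^ (θ - s.re) + ‖s‖ * (A * ((1 - X ^ (θ - s.re)) / (s.re - θ))) := by
        gcongr
        exact norm_ofReal_mul_cpow_neg_le hX0 (hR X ⟨hX, le_rfl⟩) s
    _ = _ := by ring

theorem one_sub_rpow_neg_le_mul_log {d X : ℝ} (hX : 0 < X) : 1 - X ^ (-d) ≤ d * Real.log X := by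
  simpa [Real.rpow_neg hX.le, Real.log_rpow hX] using
    Real.one_sub_inv_le_log_of_pos (Real.rpow_pos_of_pos hX d)

theorem mul_one_sub_rpow_neg_div_add_le_min {M d X : ℝ} (hd : 0 < d) (hdM : d ≤ M)
    (hX : 0 < X) :
    M * (1 - X ^ (-d)) / d + X ^ (-d) ≤ min (M / d) (M * Real.log X + X ^ (-d)) := by
  have hu : 0 ≤ X ^ (-d) := Real.rpow_nonneg hX.le _
  refine le_min ?_ ?_
  · rw [div_add' _ _ _ hd.ne', div_le_div_iff_of_pos_right hd]
    nlinarith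
  · gcongr
    rw [mul_div_assoc]
    gcongr
    · linarith
    · rw [div_le_iff₀ hd, mul_comm]
      exact one_sub_rpow_neg_le_mul_log hX

theorem beurling_partial_zeta_remainder_bound_general
    {ι : Type*} (q : ι → ℝ) (θ A κ : ℝ)
    (hq : ∀ i, 1 < q i)
    (hdisc : ∀ x : ℝ, {g : ι →₀ ℕ | gnorm q g ≤ x}.Finite)
    (hθ0 : 0 < θ) (hA : 0 < A)
    (hAx : ∀ x : ℝ, 1 ≤ x → |(Ncount q x : ℝ) - κ * (x - 1)| ≤ A * x ^ θ)
    (X : ℝ) (hX : 1 ≤ X) (s : ℂ) (hs : θ < s.re) (hs1 : s ≠ 1) :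
    ‖zetaX q X s - (κ : ℂ) * (1 - (X : ℂ) ^ ((1 : ℂ) - s)) / (s - 1)‖ ≤
      A * (‖s‖ * (1 - X ^ (θ - s.re)) / (s.re - θ) + X ^ (θ - s.re)) ∧
    ‖zetaX q X s - (κ : ℂ) * (1 - (X : ℂ) ^ ((1 : ℂ) - s)) / (s - 1)‖ ≤
      A * min (‖s‖ / (s.re - θ))
        (‖s‖ * Real.log X + X ^ (θ - s.re)) := by
  have hs0 : s ≠ 0 := by
    rintro rfl
    exact hθ0.not_gt (by simpa using hs)
  have hbound := zetaX_sub_eq_add_mul_integral hq hdisc κ hX hs0 hs1 ▸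
    norm_ofReal_mul_cpow_neg_add_mul_integral_le hX hs fun x hx => hAx x hx.1
  refine ⟨hbound, hbound.trans (mul_le_mul_of_nonneg_left ?_ hA.le)⟩
  rw [← neg_sub s.re θ]
  exact mul_one_sub_rpow_neg_div_add_le_min (sub_pos.mpr hs)
    (by linarith [re_le_norm s]) (one_pos.trans_le hX)

theorem beurling_partial_zeta_remainder_bound
    {ι : Type*} [Countable ι] (q : ι → ℝ) (θ A κ : ℝ)
    (hq : ∀ i, 1 < q i)
    (hdisc : ∀ x : ℝ, {g : ι →₀ ℕ | gnorm q g ≤ x}.Finite)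
    (hθ0 : 0 < θ) (hθ1 : θ < 1) (hA : 0 < A) (hκ : 0 < κ)
    (hAx : ∀ x : ℝ, 1 ≤ x → |(Ncount q x : ℝ) - κ * (x - 1)| ≤ A * x ^ θ)
    (X : ℝ) (hX : 1 ≤ X) (s : ℂ) (hs : θ < s.re) (hs1 : s ≠ 1) :
    ‖zetaX q X s - (κ : ℂ) * (1 - (X : ℂ) ^ ((1 : ℂ) - s)) / (s - 1)‖ ≤
      A * (‖s‖ * (1 - X ^ (θ - s.re)) / (s.re - θ) + X ^ (θ - s.re)) ∧
    ‖zetaX q X s - (κ : ℂ) * (1 - (X : ℂ) ^ ((1 : ℂ) - s)) / (s - 1)‖ ≤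
      A * min (‖s‖ / (s.re - θ))
        (‖s‖ * Real.log X + X ^ (θ - s.re)) :=
  beurling_partial_zeta_remainder_bound_general q θ A κ hq hdisc hθ0 hA hAx X hX s hs hs1
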